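/- arXiv:1809.10332 — 7 statements merged into one kernel-verified Lean document; each statement's English description precedes it below -/
import Mathlib

section
/- Let G be a group and let ℱ be a collection of pairwise commensurable subgroups of G. Then the function d(H,K) := Real.log (c(H,K)) is a metric on ℱ; that is, for all H, K, L ∈ ℱ: (i) d(H,K) ≥ 0, (ii) d(H,K) = 0 if and only if H = K (equivalently, c(H,K) = 1 iff H = K), (iii) d(H,K) = d(K,H), and (iv) d(H,K) ≤ d(H,L) + d(L,K) (equivalently, c(H,K) ≤ c(H,L) · c(L,K)). -/
/-! Writing `c(H,K) = [H : H ∩ K] · [K : H ∩ K]`, everything reduces to the relative-index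
inequality `[L : H ∩ L] ≤ [K : H ∩ K] · [L : K ∩ L]`, i.e.
`[L : H ∩ L] ≤ [L : H ∩ K ∩ L] = [K ∩ L : H ∩ K ∩ L] · [L : K ∩ L] ≤ [K : H ∩ K] · [L : K ∩ L]`.
The finiteness hypotheses matter since `relIndex` is `0` for an infinite index, so the first
step fails without them. -/

/-- The commensurability index of two subgroups `A`, `B` of a group `G`:
`c(A,B) = [A : A ⊓ B] * [B : A ⊓ B]`. Following Mathlib's convention for
`Subgroup.relindex`, a value of `0` means the index is infinite. -/
noncomputable def commIndex {G : Type*} [Group G] (A B : Subgroup G) : ℕ :=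
  (A ⊓ B).relIndex A * (A ⊓ B).relIndex B

namespace Subgroup

variable {G : Type*} [Group G] {H K L : Subgroup G}

theorem relIndex_le_relIndex_mul_relIndex (hHK : H.relIndex K ≠ 0) (hKL : K.relIndex L ≠ 0) :
    H.relIndex L ≤ H.relIndex K * K.relIndex L := by
  have hHKL : (H ⊓ K).relIndex L ≠ 0 := relIndex_inf_ne_zero (relIndex_ne_zero_trans hHK hKL) hKL
  calc H.relIndex L ≤ (H ⊓ K).relIndex L := relIndex_le_of_le_left inf_le_left hHKL
    _ = H.relIndex (K ⊓ L) * K.relIndex L := (relIndex_inf_mul_relIndex H K L).symm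
    _ ≤ H.relIndex K * K.relIndex L := by
      gcongr
      exact relIndex_le_of_le_right inf_le_left hHK

end Subgroup

section CommIndex

open Subgroup

variable {G : Type*} [Group G] {H K L : Subgroup G}

theorem commIndex_eq_relIndex_mul_relIndex (H K : Subgroup G) :
    commIndex H K = K.relIndex H * H.relIndex K := by
  rw [commIndex, inf_relIndex_left, inf_relIndex_right]

theorem commIndex_comm (H K : Subgroup G) : commIndex H K = commIndex K H := by
  rw [commIndex_eq_relIndex_mul_relIndex, commIndex_eq_relIndex_mul_relIndex, mul_comm]

theorem commIndex_eq_one_iff : commIndex H K = 1 ↔ H = K := by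
  rw [commIndex_eq_relIndex_mul_relIndex, mul_eq_one, relIndex_eq_one, relIndex_eq_one,
    le_antisymm_iff, and_comm]

theorem commIndex_le_mul_commIndex (hHL : commIndex H L ≠ 0) (hLK : commIndex L K ≠ 0) :
    commIndex H K ≤ commIndex H L * commIndex L K := by
  simp only [commIndex_eq_relIndex_mul_relIndex, ne_eq, mul_eq_zero, not_or] at hHL hLK ⊢
  calc K.relIndex H * H.relIndex K
      ≤ (K.relIndex L * L.relIndex H) * (H.relIndex L * L.relIndex K) :=
        Nat.mul_le_mul (relIndex_le_relIndex_mul_relIndex hLK.1 hHL.1)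
          (relIndex_le_relIndex_mul_relIndex hHL.2 hLK.2)
    _ = L.relIndex H * H.relIndex L * (K.relIndex L * L.relIndex K) := by ring

end CommIndex

theorem Real.log_natCast_eq_zero_iff {n : ℕ} (hn : n ≠ 0) : Real.log n = 0 ↔ n = 1 := by
  refine ⟨fun h ↦ ?_, fun h ↦ by simp [h]⟩
  exact_mod_cast Real.eq_one_of_pos_of_log_eq_zero (by positivity) h

/-- On a family `ℱ` of pairwise commensurable subgroups of a group `G`, the
function `d(H,K) := log c(H,K)` is a metric: it is nonnegative, vanishes exactly
on the diagonal, is symmetric, and satisfies the triangle inequality. -/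
theorem commIndex_log_metric {G : Type*} [Group G] (ℱ : Set (Subgroup G))
    (hcomm : ∀ H ∈ ℱ, ∀ K ∈ ℱ, commIndex H K ≠ 0) :
    ∀ H ∈ ℱ, ∀ K ∈ ℱ, ∀ L ∈ ℱ,
      0 ≤ Real.log (commIndex H K) ∧
      (Real.log (commIndex H K) = 0 ↔ H = K) ∧
      Real.log (commIndex H K) = Real.log (commIndex K H) ∧
      Real.log (commIndex H K) ≤
        Real.log (commIndex H L) + Real.log (commIndex L K) := by
  intro H hH K hK L hL
  have hHK := hcomm H hH K hK
  have hHL := hcomm H hH L hL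
  have hLK := hcomm L hL K hK
  refine ⟨Real.log_natCast_nonneg _, ?_, by rw [commIndex_comm], ?_⟩
  · rw [Real.log_natCast_eq_zero_iff hHK, commIndex_eq_one_iff]
  · rw [← Real.log_mul (by exact_mod_cast hHL) (by exact_mod_cast hLK), ← Nat.cast_mul]
    exact Real.log_le_log (by positivity) (by exact_mod_cast commIndex_le_mul_commIndex hHL hLK)
end

section
/- Let Δ be a group and let A, B be subgroups of Δ with c(A,B) = m finite. Then for every natural number n and every subgroup Δ' of Δ, if c(A, Δ') ≤ n then c(B, Δ') ≤ m · n. In particular, the set {Δ' ≤ Δ : c(A,Δ') ≤ n} is contained in the set {Δ' ≤ Δ : c(B,Δ') ≤ m · n}. -/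
section CommIndex

open Subgroup

variable {G : Type*} [Group G] (A B C : Subgroup G)

theorem commIndex_eq_relIndex_mul_relIndex_s5 : commIndex A B = B.relIndex A * A.relIndex B := by
  rw [commIndex, inf_relIndex_left, inf_relIndex_right]

theorem commIndex_comm_s5 : commIndex A B = commIndex B A := by
  rw [commIndex_eq_relIndex_mul_relIndex_s5, commIndex_eq_relIndex_mul_relIndex_s5, mul_comm]

variable {A B C}

theorem commIndex_ne_zero_trans (hAB : commIndex A B ≠ 0) (hBC : commIndex B C ≠ 0) :
    commIndex A C ≠ 0 := by
  simp only [commIndex_eq_relIndex_mul_relIndex_s5, mul_ne_zero_iff] at *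
  obtain ⟨hBA, hAB⟩ := hAB
  obtain ⟨hCB, hBC⟩ := hBC
  exact ⟨relIndex_ne_zero_trans hCB hBA, relIndex_ne_zero_trans hAB hBC⟩

theorem commIndex_le_mul (hAB : commIndex A B ≠ 0) (hBC : commIndex B C ≠ 0) :
    commIndex A C ≤ commIndex A B * commIndex B C := by
  simp only [commIndex_eq_relIndex_mul_relIndex_s5, mul_ne_zero_iff] at *
  obtain ⟨hBA, hAB⟩ := hAB
  obtain ⟨hCB, hBC⟩ := hBC
  calc C.relIndex A * A.relIndex C
      ≤ (C.relIndex B * B.relIndex A) * (A.relIndex B * B.relIndex C) :=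
        Nat.mul_le_mul (relIndex_le_relIndex_mul_relIndex hCB hBA)
          (relIndex_le_relIndex_mul_relIndex hAB hBC)
    _ = B.relIndex A * A.relIndex B * (C.relIndex B * B.relIndex C) := by ring

end CommIndex

/-- If `A`, `B` are subgroups of `Δ` with `c(A,B) = m` finite, then every
subgroup `Δ'` with `c(A,Δ') ≤ n` (finite) satisfies `c(B,Δ') ≤ m * n` (finite);
in particular `{Δ' : c(A,Δ') ≤ n} ⊆ {Δ' : c(B,Δ') ≤ m * n}`. -/
theorem commIndex_growth_comparison {Δ : Type*} [Group Δ] (A B : Subgroup Δ)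
    (m : ℕ) (hm : m ≠ 0) (hAB : commIndex A B = m) :
    (∀ n : ℕ, ∀ Δ' : Subgroup Δ, commIndex A Δ' ≠ 0 → commIndex A Δ' ≤ n →
      commIndex B Δ' ≠ 0 ∧ commIndex B Δ' ≤ m * n) ∧
    ∀ n : ℕ,
      {Δ' : Subgroup Δ | commIndex A Δ' ≠ 0 ∧ commIndex A Δ' ≤ n} ⊆
      {Δ' : Subgroup Δ | commIndex B Δ' ≠ 0 ∧ commIndex B Δ' ≤ m * n} := by
  have hBA : commIndex B A ≠ 0 := by rwa [commIndex_comm_s5, hAB]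
  have bound : ∀ n : ℕ, ∀ Δ' : Subgroup Δ, commIndex A Δ' ≠ 0 → commIndex A Δ' ≤ n →
      commIndex B Δ' ≠ 0 ∧ commIndex B Δ' ≤ m * n := fun n Δ' hAΔ' hn =>
    ⟨commIndex_ne_zero_trans hBA hAΔ', calc
      commIndex B Δ' ≤ commIndex B A * commIndex A Δ' := commIndex_le_mul hBA hAΔ'
      _ ≤ m * n := by rw [commIndex_comm_s5, hAB]; exact Nat.mul_le_mul_left m hn⟩
  exact ⟨bound, fun n Δ' h => bound n Δ' h.1 h.2⟩
end

section
/- For every natural number n, the set of additive subgroups Δ of ℝ satisfying c(ℤ, Δ) ≤ n is finite, where ℤ denotes the additive subgroup of ℝ generated by 1. -/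
/-- The commensurability index of two additive subgroups `A`, `B`:
`c(A,B) = [A : A ⊓ B] * [B : A ⊓ B]`. Following Mathlib's convention for
`AddSubgroup.relindex`, a value of `0` means the index is infinite. -/
noncomputable def addCommIndex {G : Type*} [AddGroup G] (A B : AddSubgroup G) : ℕ :=
  (A ⊓ B).relIndex A * (A ⊓ B).relIndex B

/-!
If `[ℤ : ℤ ∩ Δ] = a` and `[Δ : ℤ ∩ Δ] = b` are both finite, then `ℤ ∩ Δ = aℤ`, and since
`b • Δ ⊆ ℤ ∩ Δ` we get `Δ ⊆ (a / b)ℤ`; comparing indices over `aℤ` forces `Δ = (a / b)ℤ`.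
Hence `c(ℤ, Δ) = a * b ≤ n` leaves only the finitely many candidates `(a / b)ℤ` with
`1 ≤ a, b ≤ n`.
-/

namespace AddSubgroup

section AddGroup

variable {G : Type*} [AddGroup G]

theorem relIndex_zmultiples_nsmul {x : G} (hx : ¬IsOfFinAddOrder x) (k : ℕ) :
    (zmultiples (k • x)).relIndex (zmultiples x) = k := by
  have hinj : Function.Injective (zmultiplesHom G x) :=
    injective_zsmul_iff_not_isOfFinAddOrder.mpr hx
  have hk : zmultiples (k • x) = (zmultiples (k : ℤ)).map (zmultiplesHom G x) := by
    rw [AddMonoidHom.map_zmultiples, zmultiplesHom_apply, natCast_zsmul]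
  have htop : zmultiples x = (⊤ : AddSubgroup ℤ).map (zmultiplesHom G x) := by
    rw [← AddMonoidHom.range_eq_map, range_zmultiplesHom]
  rw [hk, htop, relIndex_map_map_of_injective _ _ hinj, relIndex_top_right, Int.index_zmultiples,
    Int.natAbs_natCast]

variable {H K L : AddSubgroup G}

theorem eq_of_relIndex_eq_of_le_left (hHK : H ≤ K) (hKL : K ≤ L)
    (h : H.relIndex L = K.relIndex L) (h0 : H.relIndex L ≠ 0) : H = K := by
  have hmul := relIndex_mul_relIndex H K L hHK hKL
  rw [← h] at hmul
  exact le_antisymm hHK (relIndex_eq_one.mp ((Nat.mul_eq_right h0).mp hmul))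

theorem eq_of_relIndex_eq_of_le_right (hHK : H ≤ K) (hKL : K ≤ L)
    (h : H.relIndex K = H.relIndex L) (h0 : H.relIndex K ≠ 0) : K = L := by
  have hmul := relIndex_mul_relIndex H K L hHK hKL
  rw [← h] at hmul
  exact le_antisymm hKL (relIndex_eq_one.mp ((Nat.mul_eq_left h0).mp hmul))

end AddGroup

section Field

variable {K : Type*} [Field K] [CharZero K]

theorem relIndex_zmultiples_natCast_mul {x : K} (hx : x ≠ 0) (k : ℕ) :
    (zmultiples ((k : K) * x)).relIndex (zmultiples x) = k := by
  rw [← nsmul_eq_mul]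
  exact relIndex_zmultiples_nsmul (not_isOfFinAddOrder_of_isAddTorsionFree hx) k

theorem eq_zmultiples_div_of_relIndex (Δ : AddSubgroup K) {a b : ℕ}
    (ha : (zmultiples (1 : K) ⊓ Δ).relIndex (zmultiples 1) = a)
    (hb : (zmultiples (1 : K) ⊓ Δ).relIndex Δ = b) (ha0 : a ≠ 0) (hb0 : b ≠ 0) :
    Δ = zmultiples ((a : K) / b) := by
  set S := zmultiples (1 : K) ⊓ Δ
  have haK : (a : K) ≠ 0 := Nat.cast_ne_zero.mpr ha0
  have hbK : (b : K) ≠ 0 := Nat.cast_ne_zero.mpr hb0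
  have haZ : (zmultiples (a : K)).relIndex (zmultiples 1) = a := by
    simpa using relIndex_zmultiples_natCast_mul (one_ne_zero : (1 : K) ≠ 0) a
  have haS : zmultiples (a : K) ≤ S := by
    refine zmultiples_le_of_mem ?_
    simpa [ha] using S.nsmul_relIndex_mem (mem_zmultiples (1 : K))
  have hS : S = zmultiples (a : K) :=
    (eq_of_relIndex_eq_of_le_left haS inf_le_left (haZ.trans ha.symm) (by rwa [haZ])).symm
  have hΔ : Δ ≤ zmultiples ((a : K) / b) := by
    intro x hx
    obtain ⟨j, hj⟩ := mem_zmultiples_iff.mp (hS ▸ hb ▸ S.nsmul_relIndex_mem hx)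
    refine mem_zmultiples_iff.mpr ⟨j, ?_⟩
    rw [zsmul_eq_mul] at hj ⊢
    rw [nsmul_eq_mul] at hj
    rw [← mul_div_assoc, hj, mul_div_cancel_left₀ x hbK]
  have hbT : (zmultiples (a : K)).relIndex (zmultiples ((a : K) / b)) = b := by
    simpa only [mul_div_cancel₀ _ hbK] using
      relIndex_zmultiples_natCast_mul (div_ne_zero haK hbK) b
  exact eq_of_relIndex_eq_of_le_right (hS ▸ inf_le_right) hΔ ((hS ▸ hb).trans hbT.symm)
    (hS ▸ hb ▸ hb0)

end Field

end AddSubgroup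

open AddSubgroup

/-- For every `n`, the set of additive subgroups `Δ` of `ℝ` that are
commensurable with `ℤ = zmultiples 1` with commensurability index at most `n`
is finite. -/
theorem finite_commensurable_with_int (n : ℕ) :
    {Δ : AddSubgroup ℝ |
      addCommIndex (AddSubgroup.zmultiples (1 : ℝ)) Δ ≠ 0 ∧
      addCommIndex (AddSubgroup.zmultiples (1 : ℝ)) Δ ≤ n}.Finite := by
  refine (((Set.finite_Icc 1 n).prod (Set.finite_Icc 1 n)).image
    fun p : ℕ × ℕ => zmultiples ((p.1 : ℝ) / p.2)).subset ?_
  rintro Δ ⟨hne, hle⟩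
  set a := (zmultiples (1 : ℝ) ⊓ Δ).relIndex (zmultiples 1)
  set b := (zmultiples (1 : ℝ) ⊓ Δ).relIndex Δ
  change a * b ≠ 0 at hne
  change a * b ≤ n at hle
  obtain ⟨ha0, hb0⟩ := mul_ne_zero_iff.mp hne
  refine ⟨(a, b), ⟨⟨Nat.one_le_iff_ne_zero.mpr ha0, ?_⟩, ⟨Nat.one_le_iff_ne_zero.mpr hb0, ?_⟩⟩,
    (eq_zmultiples_div_of_relIndex Δ rfl rfl ha0 hb0).symm⟩
  · exact (Nat.le_mul_of_pos_right a (Nat.pos_of_ne_zero hb0)).trans hle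
  · exact (Nat.le_mul_of_pos_left b (Nat.pos_of_ne_zero ha0)).trans hle
end

section
/- There exists a real constant C > 0 such that for all natural numbers n ≥ 2, the number of additive subgroups Δ of ℝ with c(ℤ, Δ) ≤ n is at most C · n · Real.log n, where ℤ denotes the additive subgroup of ℝ generated by 1. -/
namespace Subgroup

variable {G : Type*} [Group G]

@[to_additive]
theorem eq_of_le_of_relIndex_eq_left {H K L : Subgroup G} (hHK : H ≤ K) (hKL : K ≤ L)
    (h0 : H.relIndex L ≠ 0) (h : K.relIndex L = H.relIndex L) : H = K := by
  have htower := relIndex_mul_relIndex H K L hHK hKL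
  rw [h] at htower
  exact le_antisymm hHK (relIndex_eq_one.mp (by simpa [h0] using htower))

@[to_additive]
theorem eq_of_le_of_relIndex_eq_right {H K L : Subgroup G} (hHK : H ≤ K) (hKL : K ≤ L)
    (h0 : H.relIndex L ≠ 0) (h : H.relIndex K = H.relIndex L) : K = L := by
  have htower := relIndex_mul_relIndex H K L hHK hKL
  rw [h] at htower
  exact le_antisymm hKL (relIndex_eq_one.mp (by simpa [h0] using htower))

end Subgroup

namespace AddSubgroup

theorem relIndex_zmultiples_nsmul_s8 {G : Type*} [AddGroup G] {g : G} (hg : ¬IsOfFinAddOrder g)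
    (m : ℕ) : (zmultiples (m • g)).relIndex (zmultiples g) = m := by
  have hinj : Function.Injective (zmultiplesHom G g) :=
    injective_zsmul_iff_not_isOfFinAddOrder.mpr hg
  have h := relIndex_map_map_of_injective (zmultiples (m : ℤ)) ⊤ hinj
  rw [AddMonoidHom.map_zmultiples, ← AddMonoidHom.range_eq_map, range_zmultiplesHom,
    relIndex_top_right, Int.index_zmultiples] at h
  simpa using h

variable {K : Type*} [Field K] [CharZero K]

theorem eq_zmultiples_div_of_addCommIndex_ne_zero {Δ : AddSubgroup K}
    (h : addCommIndex (zmultiples 1) Δ ≠ 0) :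
    Δ = zmultiples (((zmultiples 1 ⊓ Δ).relIndex (zmultiples (1 : K)) : K) /
      (zmultiples 1 ⊓ Δ).relIndex Δ) := by
  set a := (zmultiples 1 ⊓ Δ).relIndex (zmultiples (1 : K))
  set b := (zmultiples 1 ⊓ Δ).relIndex Δ
  obtain ⟨ha, hb⟩ : a ≠ 0 ∧ b ≠ 0 := mul_ne_zero_iff.mp h
  have hab : (a / b : K) ≠ 0 := by positivity
  have hinter : zmultiples (a : K) = zmultiples 1 ⊓ Δ := by
    have ha_index : (zmultiples (a : K)).relIndex (zmultiples 1) = a := by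
      simpa using relIndex_zmultiples_nsmul_s8
        (not_isOfFinAddOrder_of_isAddTorsionFree (one_ne_zero : (1 : K) ≠ 0)) a
    refine eq_of_le_of_relIndex_eq_left ?_ inf_le_left (by rwa [ha_index]) ha_index.symm
    simpa using nsmul_relIndex_mem (zmultiples 1 ⊓ Δ) (mem_zmultiples (1 : K))
  have hΔ_index : (zmultiples (a : K)).relIndex Δ = b := by rw [hinter]
  have hle : Δ ≤ zmultiples (a / b : K) := by
    intro x hx
    have hbx := nsmul_relIndex_mem (zmultiples 1 ⊓ Δ) hx
    rw [← hinter, hΔ_index, mem_zmultiples_iff] at hbx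
    obtain ⟨k, hk⟩ := hbx
    refine mem_zmultiples_iff.mpr ⟨k, ?_⟩
    simp only [zsmul_eq_mul, nsmul_eq_mul] at hk ⊢
    field_simp
    linear_combination hk
  have hb_index : (zmultiples (a : K)).relIndex (zmultiples (a / b : K)) = b := by
    have := relIndex_zmultiples_nsmul_s8 (not_isOfFinAddOrder_of_isAddTorsionFree hab) b
    rwa [nsmul_eq_mul, mul_div_cancel₀ _ (by positivity)] at this
  exact eq_of_le_of_relIndex_eq_right (hinter ▸ inf_le_right) hle (by rwa [hb_index])
    (hΔ_index.trans hb_index.symm)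

theorem setOf_addCommIndex_le_subset_image (n : ℕ) :
    {Δ : AddSubgroup K | addCommIndex (zmultiples 1) Δ ≠ 0 ∧ addCommIndex (zmultiples 1) Δ ≤ n} ⊆
      (fun ab => zmultiples ((ab.1 : K) / ab.2)) ''
        ((Finset.Icc 1 n).sigma fun a => Finset.Icc 1 (n / a) : Set ((_ : ℕ) × ℕ)) := by
  rintro Δ ⟨hne, hle⟩
  obtain ⟨ha, hb⟩ := mul_ne_zero_iff.mp hne
  refine ⟨⟨(zmultiples 1 ⊓ Δ).relIndex (zmultiples 1), (zmultiples 1 ⊓ Δ).relIndex Δ⟩, ?_,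
    (eq_zmultiples_div_of_addCommIndex_ne_zero hne).symm⟩
  rw [addCommIndex] at hle
  rw [Finset.mem_coe, Finset.mem_sigma, Finset.mem_Icc, Finset.mem_Icc,
    Nat.le_div_iff_mul_le (Nat.pos_of_ne_zero ha), mul_comm]
  exact ⟨⟨Nat.one_le_iff_ne_zero.mpr ha,
    (Nat.le_mul_of_pos_right _ (Nat.pos_of_ne_zero hb)).trans hle⟩, Nat.one_le_iff_ne_zero.mpr hb, hle⟩

end AddSubgroup

theorem card_sigma_Icc_div_le_mul_one_add_log (n : ℕ) :
    (((Finset.Icc 1 n).sigma fun a => Finset.Icc 1 (n / a)).card : ℝ) ≤ n * (1 + Real.log n) := by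
  calc (((Finset.Icc 1 n).sigma fun a => Finset.Icc 1 (n / a)).card : ℝ)
      = ∑ a ∈ Finset.Icc 1 n, ((n / a : ℕ) : ℝ) := by simp
    _ ≤ ∑ a ∈ Finset.Icc 1 n, (n : ℝ) * (a : ℝ)⁻¹ :=
        Finset.sum_le_sum fun a _ => Nat.cast_div_le
    _ = n * harmonic n := by
        rw [← Finset.mul_sum, harmonic_eq_sum_Icc]
        push_cast
        rfl
    _ ≤ n * (1 + Real.log n) := by gcongr; exact harmonic_le_one_add_log n

/-- There is a constant `C > 0` such that for all `n ≥ 2`, the number of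
additive subgroups `Δ` of `ℝ` with `c(ℤ, Δ) ≤ n` is at most `C * n * log n`,
where `ℤ = zmultiples 1`. -/
theorem commGrowth_int_upper_bound :
    ∃ C : ℝ, 0 < C ∧ ∀ n : ℕ, 2 ≤ n →
      (Nat.card {Δ : AddSubgroup ℝ |
          addCommIndex (AddSubgroup.zmultiples (1 : ℝ)) Δ ≠ 0 ∧
          addCommIndex (AddSubgroup.zmultiples (1 : ℝ)) Δ ≤ n} : ℝ) ≤
        C * n * Real.log n := by
  refine ⟨3, by norm_num, fun n hn => ?_⟩
  have hcard := (Set.ncard_le_ncard (AddSubgroup.setOf_addCommIndex_le_subset_image (K := ℝ) n)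
    ((Finset.finite_toSet _).image _)).trans (Set.ncard_image_le (Finset.finite_toSet _))
  rw [Set.ncard_coe_finset, ← Nat.card_coe_set_eq] at hcard
  have hlog : 1 ≤ 2 * Real.log n := by
    have := Real.log_le_log (by norm_num) (by exact_mod_cast hn : (2 : ℝ) ≤ n)
    linarith [Real.log_two_gt_d9]
  calc (Nat.card _ : ℝ) ≤ ((Finset.Icc 1 n).sigma fun a => Finset.Icc 1 (n / a)).card := by
        exact_mod_cast hcard
    _ ≤ n * (1 + Real.log n) := card_sigma_Icc_div_le_mul_one_add_log n
    _ ≤ 3 * n * Real.log n := by nlinarith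
end

section
/- There exists a real constant C > 0 such that for all natural numbers n ≥ 2, n · (Real.log n)^(Real.log 2) ≤ C · (the number of additive subgroups Δ of ℝ with c(ℤ, Δ) ≤ ⌈C · n⌉), where ℤ denotes the additive subgroup of ℝ generated by 1. -/
open AddSubgroup Finset
open scoped Nat

theorem addCommIndex_comm {G : Type*} [AddGroup G] (A B : AddSubgroup G) :
    addCommIndex A B = addCommIndex B A := by
  rw [addCommIndex, addCommIndex, inf_comm, mul_comm]

theorem factorial_nsmul_mem_of_addCommIndex_le {G : Type*} [AddCommGroup G]
    {A B : AddSubgroup G} {m : ℕ} (h₀ : addCommIndex A B ≠ 0) (hm : addCommIndex A B ≤ m)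
    {b : G} (hb : b ∈ B) : m ! • b ∈ A := by
  have hB : (A ⊓ B).relIndex B ≠ 0 := right_ne_zero_of_mul h₀
  obtain ⟨k, hk⟩ : (A ⊓ B).relIndex B ∣ m ! :=
    Nat.dvd_factorial (Nat.pos_of_ne_zero hB)
      ((Nat.le_mul_of_pos_left _ (Nat.pos_of_ne_zero (left_ne_zero_of_mul h₀))).trans hm)
  rw [hk, mul_nsmul]
  exact ((A ⊓ B).nsmul_mem (nsmul_relIndex_mem _ hb) k).1

theorem AddSubgroup.finite_setOf_zsmul_mem_le_zmultiples {G : Type*} [AddGroup G] (g : G)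
    {n : ℤ} (hn : n ≠ 0) : {H : AddSubgroup G | n • g ∈ H ∧ H ≤ zmultiples g}.Finite := by
  refine ((n.natAbs.divisors : Set ℕ).toFinite.image fun j => zmultiples (j • g)).subset ?_
  rintro H ⟨hnH, hH⟩
  set f := zmultiplesHom G g
  obtain ⟨a, ha⟩ := Int.subgroup_cyclic (H.comap f)
  rw [← zmultiples_eq_closure] at ha
  have hH : zmultiples (a • g) = H := by
    have := map_comap_eq_self (f := f) (H := H) (by rwa [range_zmultiplesHom])
    rwa [ha, AddMonoidHom.map_zmultiples, zmultiplesHom_apply] at this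
  have hdvd : a ∣ n := by
    rw [← Int.mem_zmultiples_iff, ← ha]
    exact hnH
  refine ⟨a.natAbs, by simpa [hn] using Int.natAbs_dvd_natAbs.2 hdvd, ?_⟩
  rw [← hH]
  obtain ⟨k, rfl | rfl⟩ := Int.eq_nat_or_neg a <;> simp [zmultiples_neg]

theorem AddSubgroup.relIndex_zmultiples_nsmul_s9 {G : Type*} [AddGroup G] {g : G}
    (hg : ¬IsOfFinAddOrder g) (k : ℕ) : (zmultiples (k • g)).relIndex (zmultiples g) = k := by
  set f := zmultiplesHom G g
  have hf : Function.Injective f := injective_zsmul_iff_not_isOfFinAddOrder.2 hg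
  have hk : zmultiples (k • g) = (zmultiples (k : ℤ)).map f := by
    rw [AddMonoidHom.map_zmultiples, zmultiplesHom_apply, natCast_zsmul]
  have hg : zmultiples g = (⊤ : AddSubgroup ℤ).map f := by
    rw [← AddMonoidHom.range_eq_map, range_zmultiplesHom]
  rw [hk, hg, relIndex_map_map_of_injective _ _ hf, relIndex_top_right, Int.index_zmultiples,
    Int.natAbs_natCast]

section CharZeroField

variable {K : Type*} [Field K] [CharZero K]

theorem finite_setOf_addCommIndex_le (x : K) (m : ℕ) :
    {Δ : AddSubgroup K | addCommIndex (zmultiples x) Δ ≠ 0 ∧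
      addCommIndex (zmultiples x) Δ ≤ m}.Finite := by
  have hN : (m ! : K) ≠ 0 := by exact_mod_cast Nat.factorial_ne_zero m
  refine (AddSubgroup.finite_setOf_zsmul_mem_le_zmultiples (x / m !)
    (n := (m ! : ℤ) ^ 2) (by positivity)).subset ?_
  rintro Δ ⟨h₀, hm⟩
  have h₀' : addCommIndex Δ (zmultiples x) ≠ 0 := by rwa [addCommIndex_comm]
  have hm' : addCommIndex Δ (zmultiples x) ≤ m := by rwa [addCommIndex_comm]
  constructor
  · convert factorial_nsmul_mem_of_addCommIndex_le h₀' hm' (mem_zmultiples x) using 1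
    simp only [zsmul_eq_mul, nsmul_eq_mul]
    push_cast
    field_simp
  · intro y hy
    obtain ⟨a, ha⟩ := factorial_nsmul_mem_of_addCommIndex_le h₀ hm hy
    refine ⟨a, ?_⟩
    simp only [zsmul_eq_mul, nsmul_eq_mul] at ha ⊢
    field_simp
    rw [ha]

theorem inf_zmultiples_div {p q : ℕ} (hq : q ≠ 0) (hpq : p.Coprime q) :
    zmultiples (1 : K) ⊓ zmultiples ((p : K) / q) = zmultiples (p : K) := by
  apply le_antisymm
  · rintro y ⟨⟨a, rfl⟩, ⟨b, hb⟩⟩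
    simp only [zsmul_eq_mul, mul_one] at hb ⊢
    have hab : b * (p : ℤ) = a * q := by
      have : (b : K) * p = a * q := by field_simp at hb; linear_combination hb
      exact_mod_cast this
    obtain ⟨c, rfl⟩ : (p : ℤ) ∣ a :=
      (Nat.isCoprime_iff_coprime.2 hpq).dvd_of_dvd_mul_right ⟨b, by rw [← hab, mul_comm]⟩
    exact ⟨c, by push_cast; ring⟩
  · rw [zmultiples_le, AddSubgroup.mem_inf]
    have hq' : (q : K) ≠ 0 := by exact_mod_cast hq
    refine ⟨⟨p, by simp⟩, ⟨q, ?_⟩⟩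
    show (q : ℤ) • ((p : K) / q) = p
    rw [zsmul_eq_mul]
    push_cast
    field_simp

theorem addCommIndex_zmultiples_div {p q : ℕ} (hp : p ≠ 0) (hq : q ≠ 0) (hpq : p.Coprime q) :
    addCommIndex (zmultiples (1 : K)) (zmultiples ((p : K) / q)) = p * q := by
  have h₁ : (zmultiples (p : K)).relIndex (zmultiples 1) = p := by
    simpa using relIndex_zmultiples_nsmul_s9
      (not_isOfFinAddOrder_of_isAddTorsionFree (one_ne_zero : (1 : K) ≠ 0)) p
  have h₂ : (zmultiples (p : K)).relIndex (zmultiples ((p : K) / q)) = q := by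
    have := relIndex_zmultiples_nsmul_s9
      (not_isOfFinAddOrder_of_isAddTorsionFree (by positivity : (p : K) / q ≠ 0)) q
    rwa [nsmul_eq_mul, mul_div_cancel₀ _ (Nat.cast_ne_zero.2 hq)] at this
  rw [addCommIndex, inf_zmultiples_div hq hpq, h₁, h₂]

theorem injOn_zmultiples_ratCast : Set.InjOn (fun r : ℚ => zmultiples (r : K)) (Set.Ioi 0) := by
  intro r hr s hs h
  rcases (zmultiples_eq_zmultiples_iff (not_isOfFinAddOrder_of_isAddTorsionFree
    (Rat.cast_ne_zero.2 (ne_of_gt hr)))).1 h with h | h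
  · exact_mod_cast h
  · have : -r = s := by exact_mod_cast h
    linarith [Set.mem_Ioi.1 hr, Set.mem_Ioi.1 hs]

end CharZeroField

theorem injOn_natCast_div_coprime :
    Set.InjOn (fun z : ℕ × ℕ => (z.1 / z.2 : ℚ)) {z | 0 < z.2 ∧ z.1.Coprime z.2} := by
  rintro ⟨p, q⟩ ⟨hq, hpq⟩ ⟨p', q'⟩ ⟨hq', hpq'⟩ h
  have hcast (a b : ℕ) : (a : ℚ) / b = ((a : ℤ) : ℚ) / ((b : ℤ) : ℚ) := by
    rw [Int.cast_natCast, Int.cast_natCast]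
  simp only [hcast] at h
  have num := congrArg Rat.num h
  have den := congrArg (fun r : ℚ => (r.den : ℤ)) h
  rw [Rat.num_div_eq_of_coprime (by exact_mod_cast hq) (by simpa using hpq),
    Rat.num_div_eq_of_coprime (by exact_mod_cast hq') (by simpa using hpq')] at num
  rw [Rat.den_div_eq_of_coprime (by exact_mod_cast hq) (by simpa using hpq),
    Rat.den_div_eq_of_coprime (by exact_mod_cast hq') (by simpa using hpq')] at den
  simp_all

def mulLePairs (m : ℕ) : Finset (ℕ × ℕ) :=
  {z ∈ Icc 1 m ×ˢ Icc 1 m | z.1 * z.2 ≤ m}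

def coprimeMulLePairs (m : ℕ) : Finset (ℕ × ℕ) :=
  {z ∈ mulLePairs m | z.1.Coprime z.2}

theorem mem_mulLePairs {m : ℕ} {z : ℕ × ℕ} :
    z ∈ mulLePairs m ↔ 0 < z.1 ∧ 0 < z.2 ∧ z.1 * z.2 ≤ m := by
  simp only [mulLePairs, mem_filter, mem_product, mem_Icc]
  constructor
  · rintro ⟨⟨⟨h₁, -⟩, h₂, -⟩, h⟩
    exact ⟨h₁, h₂, h⟩
  · rintro ⟨h₁, h₂, h⟩
    exact ⟨⟨⟨h₁, (Nat.le_mul_of_pos_right _ h₂).trans h⟩, h₂,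
      (Nat.le_mul_of_pos_left _ h₁).trans h⟩, h⟩

theorem mem_coprimeMulLePairs {m : ℕ} {z : ℕ × ℕ} :
    z ∈ coprimeMulLePairs m ↔ 0 < z.1 ∧ 0 < z.2 ∧ z.1 * z.2 ≤ m ∧ z.1.Coprime z.2 := by
  rw [coprimeMulLePairs, mem_filter, mem_mulLePairs, and_assoc, and_assoc]

theorem card_mulLePairs (m : ℕ) : #(mulLePairs m) = ∑ p ∈ Icc 1 m, m / p := by
  rw [mulLePairs, card_filter, sum_product]
  refine sum_congr rfl fun p hp => ?_
  rw [← card_filter]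
  have : {q ∈ Icc 1 m | p * q ≤ m} = Icc 1 (m / p) := by
    ext q
    simp only [mem_filter, mem_Icc, Nat.le_div_iff_mul_le (mem_Icc.1 hp).1]
    constructor
    · rintro ⟨⟨h₁, -⟩, h⟩
      exact ⟨h₁, by linarith⟩
    · rintro ⟨h₁, h⟩
      exact ⟨⟨h₁, by nlinarith [(mem_Icc.1 hp).1]⟩, by linarith⟩
  rw [this, Nat.card_Icc, Nat.add_sub_cancel]

theorem mul_log_sub_le_card_mulLePairs (m : ℕ) : m * Real.log m - m ≤ #(mulLePairs m) := by
  have hfloor (p : ℕ) : (m : ℝ) / p - 1 ≤ (m / p : ℕ) := by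
    rw [← Nat.floor_div_eq_div (K := ℝ)]
    exact (Nat.sub_one_lt_floor _).le
  have hlog : Real.log m ≤ harmonic m := by
    rcases m.eq_zero_or_pos with rfl | hm
    · simp
    · calc Real.log m ≤ Real.log (m + 1 : ℕ) :=
            Real.log_le_log (by positivity) (by push_cast; linarith)
        _ ≤ harmonic m := log_add_one_le_harmonic m
  calc m * Real.log m - m ≤ m * harmonic m - m := by gcongr
    _ = ∑ p ∈ Icc 1 m, ((m : ℝ) / p - 1) := by
      rw [sum_sub_distrib, harmonic_eq_sum_Icc, Rat.cast_sum, mul_sum]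
      simp [div_eq_mul_inv]
    _ ≤ #(mulLePairs m) := by
      rw [card_mulLePairs, Nat.cast_sum]
      exact sum_le_sum fun p _ => hfloor p

theorem card_mulLePairs_le (m : ℕ) : (#(mulLePairs m) : ℝ) ≤ m * (1 + Real.log m) :=
  calc (#(mulLePairs m) : ℝ) = ∑ p ∈ Icc 1 m, ((m / p : ℕ) : ℝ) := by
        rw [card_mulLePairs, Nat.cast_sum]
    _ ≤ ∑ p ∈ Icc 1 m, (m : ℝ) / p := sum_le_sum fun p _ => Nat.cast_div_le
    _ = m * harmonic m := by
      rw [harmonic_eq_sum_Icc, Rat.cast_sum, mul_sum]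
      simp [div_eq_mul_inv]
    _ ≤ m * (1 + Real.log m) := by gcongr; exact harmonic_le_one_add_log m

theorem mulLePairs_subset (m : ℕ) :
    mulLePairs m ⊆ coprimeMulLePairs m ∪ (Icc 2 m).biUnion
      fun d => (mulLePairs (m / (d * d))).image fun z => (z.1 * d, z.2 * d) := by
  rintro ⟨p, q⟩ hz
  by_cases hpq : p.Coprime q
  · exact mem_union_left _ (mem_filter.2 ⟨hz, hpq⟩)
  obtain ⟨hp, hq, hle⟩ := mem_mulLePairs.1 hz
  obtain ⟨p', q', -, hp', hq'⟩ := Nat.exists_coprime p q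
  set d := p.gcd q
  have hd : 2 ≤ d := by
    have : d ≠ 0 := Nat.gcd_ne_zero_left hp.ne'
    have : d ≠ 1 := hpq
    omega
  have hdm : d ≤ m := (Nat.gcd_le_left q hp).trans ((Nat.le_mul_of_pos_right p hq).trans hle)
  refine mem_union_right _ (mem_biUnion.2 ⟨d, mem_Icc.2 ⟨hd, hdm⟩,
    mem_image.2 ⟨(p', q'), mem_mulLePairs.2 ⟨?_, ?_, ?_⟩, by rw [← hp', ← hq']⟩⟩)
  · exact Nat.pos_of_mul_pos_right (hp'.symm ▸ hp : 0 < p' * d)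
  · exact Nat.pos_of_mul_pos_right (hq'.symm ▸ hq : 0 < q' * d)
  · rw [Nat.le_div_iff_mul_le (by positivity)]
    calc p' * q' * (d * d) = p * q := by rw [hp', hq']; ring
      _ ≤ m := hle

theorem card_mulLePairs_le_card_coprimeMulLePairs_add (m : ℕ) :
    #(mulLePairs m) ≤ #(coprimeMulLePairs m) + ∑ d ∈ Icc 2 m, #(mulLePairs (m / (d * d))) :=
  calc #(mulLePairs m) ≤ _ := card_le_card (mulLePairs_subset m)
    _ ≤ _ := card_union_le _ _
    _ ≤ _ := by
      gcongr
      exact card_biUnion_le.trans (sum_le_sum fun d _ => card_image_le)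

theorem sum_Icc_two_inv_sq_le (m : ℕ) : ∑ d ∈ Icc 2 m, ((d : ℝ) ^ 2)⁻¹ ≤ 3 / 4 := by
  rcases lt_or_ge m 2 with hm | hm
  · rw [Icc_eq_empty (by omega), sum_empty]
    norm_num
  rw [← insert_Icc_add_one_left_eq_Icc hm, sum_insert (by simp), Icc_add_one_left_eq_Ioc]
  have hsum := sum_Ioc_inv_sq_le_sub (α := ℝ) two_ne_zero hm
  have hm' : (0 : ℝ) ≤ (m : ℝ)⁻¹ := by positivity
  norm_num at hsum ⊢
  linarith

theorem card_mulLePairs_div_sq_le (m d : ℕ) :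
    (#(mulLePairs (m / (d * d))) : ℝ) ≤ ((d : ℝ) ^ 2)⁻¹ * (m * (1 + Real.log m)) := by
  set k := m / (d * d)
  have hk : (k : ℝ) ≤ ((d : ℝ) ^ 2)⁻¹ * m := by
    rw [← div_eq_inv_mul, sq]
    exact_mod_cast Nat.cast_div_le
  have hlog : Real.log k ≤ Real.log m := by
    rcases k.eq_zero_or_pos with hk₀ | hk₀
    · simp [hk₀, Real.log_natCast_nonneg]
    · exact Real.log_le_log (by positivity) (by exact_mod_cast Nat.div_le_self m (d * d))
  calc (#(mulLePairs k) : ℝ) ≤ k * (1 + Real.log k) := card_mulLePairs_le k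
    _ ≤ ((d : ℝ) ^ 2)⁻¹ * m * (1 + Real.log m) := by gcongr
    _ = _ := by ring

theorem mul_log_sub_le_card_coprimeMulLePairs (m : ℕ) :
    m * (Real.log m - 7) / 4 ≤ #(coprimeMulLePairs m) := by
  have herror : ∑ d ∈ Icc 2 m, (#(mulLePairs (m / (d * d))) : ℝ) ≤
      3 / 4 * (m * (1 + Real.log m)) :=
    calc _ ≤ ∑ d ∈ Icc 2 m, ((d : ℝ) ^ 2)⁻¹ * (m * (1 + Real.log m)) :=
          sum_le_sum fun d _ => card_mulLePairs_div_sq_le m d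
      _ = (∑ d ∈ Icc 2 m, ((d : ℝ) ^ 2)⁻¹) * (m * (1 + Real.log m)) := by rw [sum_mul]
      _ ≤ _ := by
        gcongr
        exact sum_Icc_two_inv_sq_le m
  have hcover : (#(mulLePairs m) : ℝ) ≤
      #(coprimeMulLePairs m) + ∑ d ∈ Icc 2 m, (#(mulLePairs (m / (d * d))) : ℝ) := by
    exact_mod_cast card_mulLePairs_le_card_coprimeMulLePairs_add m
  linarith [mul_log_sub_le_card_mulLePairs m]

theorem card_coprimeMulLePairs_le_natCard {K : Type*} [Field K] [CharZero K] (m : ℕ) :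
    #(coprimeMulLePairs m) ≤ Nat.card {Δ : AddSubgroup K |
      addCommIndex (zmultiples 1) Δ ≠ 0 ∧ addCommIndex (zmultiples 1) Δ ≤ m} := by
  rw [Nat.card_coe_set_eq, ← Set.ncard_coe_finset]
  refine Set.ncard_le_ncard_of_injOn (fun z => zmultiples ((z.1 : K) / z.2)) ?_ ?_
    (finite_setOf_addCommIndex_le 1 m)
  · intro z hz
    obtain ⟨hp, hq, hle, hco⟩ := mem_coprimeMulLePairs.1 hz
    have hc := addCommIndex_zmultiples_div (K := K) hp.ne' hq.ne' hco
    exact ⟨by rw [hc]; positivity, by rw [hc]; exact hle⟩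
  · have hdiv : Set.InjOn (fun z : ℕ × ℕ => (z.1 / z.2 : ℚ)) (coprimeMulLePairs m) :=
      injOn_natCast_div_coprime.mono fun z hz => by
        obtain ⟨-, hq, -, hco⟩ := mem_coprimeMulLePairs.1 hz
        exact ⟨hq, hco⟩
    have hpos : Set.MapsTo (fun z : ℕ × ℕ => (z.1 / z.2 : ℚ)) (coprimeMulLePairs m)
        (Set.Ioi 0) := fun z hz => by
      obtain ⟨hp, hq, -⟩ := mem_coprimeMulLePairs.1 hz
      show (0 : ℚ) < z.1 / z.2
      exact div_pos (by exact_mod_cast hp) (by exact_mod_cast hq)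
    simpa [Function.comp_def] using (injOn_zmultiples_ratCast (K := K)).comp hdiv hpos

theorem Real.rpow_le_one_add {x a : ℝ} (hx : 0 ≤ x) (ha₀ : 0 ≤ a) (ha₁ : a ≤ 1) :
    x ^ a ≤ 1 + x :=
  calc x ^ a ≤ (1 + x) ^ a := Real.rpow_le_rpow hx (by linarith) ha₀
    _ ≤ 1 + a * x := rpow_one_add_le_one_add_mul_self (by linarith) ha₀ ha₁
    _ ≤ 1 + x := by nlinarith

/-- There is a constant `C > 0` such that for all `n ≥ 2`,
`n * (log n) ^ (log 2)` is at most `C` times the number of additive subgroups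
`Δ` of `ℝ` with `c(ℤ, Δ) ≤ ⌈C * n⌉`, where `ℤ = zmultiples 1`. -/
theorem commGrowth_int_lower_bound :
    ∃ C : ℝ, 0 < C ∧ ∀ n : ℕ, 2 ≤ n →
      (n : ℝ) * Real.log n ^ Real.log 2 ≤
        C * (Nat.card {Δ : AddSubgroup ℝ |
          addCommIndex (AddSubgroup.zmultiples (1 : ℝ)) Δ ≠ 0 ∧
          addCommIndex (AddSubgroup.zmultiples (1 : ℝ)) Δ ≤ ⌈C * n⌉₊} : ℝ) := by
  refine ⟨Real.exp 8, Real.exp_pos 8, fun n hn => ?_⟩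
  set m := ⌈Real.exp 8 * n⌉₊
  have hn₀ : (0 : ℝ) < n := by exact_mod_cast (by omega : 0 < n)
  have hm : Real.exp 8 * n ≤ m := Nat.le_ceil _
  have hlog : 8 + Real.log n ≤ Real.log m := by
    rw [← Real.log_exp 8, ← Real.log_mul (Real.exp_pos 8).ne' hn₀.ne']
    exact Real.log_le_log (by positivity) hm
  have hexp : 9 ≤ Real.exp 8 := by linarith [Real.add_one_le_exp 8]
  have hlog_n : 0 ≤ Real.log n := Real.log_natCast_nonneg n
  calc (n : ℝ) * Real.log n ^ Real.log 2
      ≤ n * (1 + Real.log n) := by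
        gcongr
        exact Real.rpow_le_one_add hlog_n (Real.log_nonneg one_le_two)
          (by linarith [Real.log_two_lt_d9])
    _ ≤ Real.exp 8 * (Real.exp 8 * n * (1 + Real.log n) / 4) := by
        have h₄ : (4 : ℝ) ≤ Real.exp 8 * Real.exp 8 := by nlinarith
        nlinarith [mul_le_mul_of_nonneg_right h₄ (by positivity : 0 ≤ (n : ℝ) * (1 + Real.log n))]
    _ ≤ Real.exp 8 * (m * (Real.log m - 7) / 4) := by
        gcongr
        linarith
    _ ≤ Real.exp 8 * #(coprimeMulLePairs m) := by
        gcongr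
        exact mul_log_sub_le_card_coprimeMulLePairs m
    _ ≤ _ := by
        gcongr
        exact card_coprimeMulLePairs_le_natCard m
end

section
/- There exists a real constant C > 0 such that for all natural numbers n ≥ 2, n · (Real.log n)^(Real.log 2) ≤ C · ∑_{k=1}^{n} 2^(ω(k)), where ω(k) denotes the number of distinct prime divisors of k. -/
/-!
Counting pairs `(d, m)` with `d` squarefree and `d * m ≤ n` gives
`∑_{k ≤ n} 2 ^ ω(k) = ∑_{d ≤ n squarefree} ⌊n / d⌋ ≥ n ∑_{d ≤ n squarefree} 1 / d - n`.
Writing every `k ≤ n` as `b² a` with `a` squarefree bounds the harmonic sum by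
`(∑_{a squarefree} 1 / a) (∑_b 1 / b²) ≤ 2 ∑_{a squarefree} 1 / a`, so the squarefree reciprocal
sum is at least `log n / 2` and the whole sum is `≫ n log n ≥ n (log n) ^ (log 2)`.
-/

open ArithmeticFunction Finset
open scoped ArithmeticFunction.omega ArithmeticFunction.zeta

theorem Nat.card_divisors_filter_squarefree {n : ℕ} (hn : n ≠ 0) :
    #{d ∈ n.divisors | Squarefree d} = 2 ^ ω n := by
  rw [card_eq_sum_ones, Nat.sum_divisors_filter_squarefree hn, sum_const, card_powerset,
    smul_eq_mul, mul_one, Nat.factors_eq, List.toFinset_coe, List.card_toFinset,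
    cardDistinctFactors_apply]

namespace ArithmeticFunction

variable {R : Type*} [Semiring R]

def squarefreeIndicator : ArithmeticFunction R :=
  ⟨fun n => if Squarefree n then 1 else 0, by simp⟩

theorem squarefreeIndicator_apply (n : ℕ) :
    (squarefreeIndicator : ArithmeticFunction R) n = if Squarefree n then 1 else 0 :=
  rfl

theorem squarefreeIndicator_mul_zeta_apply {n : ℕ} (hn : n ≠ 0) :
    ((squarefreeIndicator : ArithmeticFunction R) * ζ) n = 2 ^ ω n := by
  rw [coe_mul_zeta_apply]
  simp only [squarefreeIndicator_apply]
  rw [sum_ite, sum_const_zero, add_zero, sum_const, nsmul_one,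
    Nat.card_divisors_filter_squarefree hn, Nat.cast_pow, Nat.cast_ofNat]

theorem sum_Icc_two_pow_cardDistinctFactors (n : ℕ) :
    ∑ k ∈ Icc 1 n, (2 : R) ^ ω k = ∑ d ∈ Icc 1 n with Squarefree d, ((n / d : ℕ) : R) := by
  have hIoc : Icc 1 n = Ioc 0 n := Icc_add_one_left_eq_Ioc 0 n
  calc ∑ k ∈ Icc 1 n, (2 : R) ^ ω k
      = ∑ k ∈ Ioc 0 n, ((squarefreeIndicator : ArithmeticFunction R) * ζ) k := by
        rw [hIoc]
        exact sum_congr rfl fun k hk =>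
          (squarefreeIndicator_mul_zeta_apply (mem_Ioc.1 hk).1.ne').symm
    _ = ∑ d ∈ Icc 1 n with Squarefree d, ((n / d : ℕ) : R) := by
        rw [sum_Ioc_mul_zeta_eq_sum, sum_filter, hIoc]
        simp only [squarefreeIndicator_apply, ite_mul, one_mul, zero_mul]

end ArithmeticFunction

theorem sum_Icc_two_pow_cardDistinctFactors_ge (n : ℕ) :
    n * ∑ d ∈ Icc 1 n with Squarefree d, (d : ℝ)⁻¹ - n ≤ ∑ k ∈ Icc 1 n, (2 : ℝ) ^ ω k := by
  set F := {d ∈ Icc 1 n | Squarefree d}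
  have hF : (#F : ℝ) ≤ n := by
    exact_mod_cast (card_filter_le _ _).trans (Nat.card_Icc 1 n).le
  have hfloor : ∀ d ∈ F, (n : ℝ) * (d : ℝ)⁻¹ - 1 ≤ ((n / d : ℕ) : ℝ) := fun d _ => by
    rw [← Nat.floor_div_eq_div (K := ℝ), ← div_eq_mul_inv]
    exact (Nat.sub_one_lt_floor _).le
  calc (n : ℝ) * ∑ d ∈ F, (d : ℝ)⁻¹ - n
      ≤ ∑ d ∈ F, ((n : ℝ) * (d : ℝ)⁻¹ - 1) := by
        rw [sum_sub_distrib, ← mul_sum, sum_const, nsmul_one]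
        linarith
    _ ≤ ∑ k ∈ Icc 1 n, (2 : ℝ) ^ ω k := by
        rw [sum_Icc_two_pow_cardDistinctFactors]
        exact sum_le_sum hfloor

theorem sum_Icc_inv_sq_le_two (n : ℕ) : ∑ b ∈ Icc 1 n, ((b : ℝ) ^ 2)⁻¹ ≤ 2 := by
  have hIoo : Ioo 0 (n + 1) = Icc 1 n := by ext; simp only [mem_Ioo, mem_Icc]; omega
  simpa [hIoo] using sum_Ioo_inv_sq_le (α := ℝ) 0 (n + 1)

theorem sum_Icc_inv_le_mul_sum_inv_sq (n : ℕ) :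
    ∑ k ∈ Icc 1 n, (k : ℝ)⁻¹ ≤
      (∑ a ∈ Icc 1 n with Squarefree a, (a : ℝ)⁻¹) * ∑ b ∈ Icc 1 n, ((b : ℝ) ^ 2)⁻¹ := by
  set P := {a ∈ Icc 1 n | Squarefree a} ×ˢ Icc 1 n
  have hcover : Icc 1 n ⊆ P.image (fun p => p.2 ^ 2 * p.1) := by
    intro k hk
    obtain ⟨hk1, hkn⟩ := mem_Icc.1 hk
    obtain ⟨a, b, ha, hb, rfl, hsq⟩ := Nat.sq_mul_squarefree_of_pos hk1
    have hab : a ≤ b ^ 2 * a := Nat.le_mul_of_pos_left a (by positivity)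
    have hba : b ≤ b ^ 2 * a := (Nat.le_self_pow two_ne_zero b).trans (Nat.le_mul_of_pos_right _ ha)
    refine mem_image.2 ⟨(a, b), ?_, rfl⟩
    simp only [P, mem_product, mem_filter, mem_Icc]
    exact ⟨⟨⟨ha, hab.trans hkn⟩, hsq⟩, hb, hba.trans hkn⟩
  calc ∑ k ∈ Icc 1 n, (k : ℝ)⁻¹
      ≤ ∑ k ∈ P.image (fun p => p.2 ^ 2 * p.1), ((k : ℕ) : ℝ)⁻¹ :=
        sum_le_sum_of_subset_of_nonneg hcover fun _ _ _ => by positivity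
    _ ≤ ∑ p ∈ P, ((p.2 ^ 2 * p.1 : ℕ) : ℝ)⁻¹ :=
        sum_image_le_of_nonneg fun _ _ => by positivity
    _ = _ := by
        rw [sum_mul_sum, sum_product]
        push_cast
        simp only [mul_inv, mul_comm]

theorem log_le_two_mul_sum_squarefree_inv (n : ℕ) :
    Real.log n ≤ 2 * ∑ a ∈ Icc 1 n with Squarefree a, (a : ℝ)⁻¹ := by
  set T := ∑ a ∈ Icc 1 n with Squarefree a, (a : ℝ)⁻¹
  calc Real.log n ≤ ∑ k ∈ Icc 1 n, (k : ℝ)⁻¹ := by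
        simpa [harmonic_eq_sum_Icc] using log_le_harmonic_floor (n : ℝ) n.cast_nonneg
    _ ≤ T * ∑ b ∈ Icc 1 n, ((b : ℝ) ^ 2)⁻¹ := sum_Icc_inv_le_mul_sum_inv_sq n
    _ ≤ T * 2 := mul_le_mul_of_nonneg_left (sum_Icc_inv_sq_le_two n) (by positivity)
    _ = 2 * T := mul_comm T 2

theorem Real.rpow_le_one_add_self {x p : ℝ} (hx : 0 ≤ x) (hp₀ : 0 ≤ p) (hp₁ : p ≤ 1) :
    x ^ p ≤ 1 + x := by
  rcases le_or_gt x 1 with h | h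
  · linarith [Real.rpow_le_one hx h hp₀]
  · linarith [Real.rpow_le_self_of_one_le h.le hp₁]

open ArithmeticFunction in
/-- There is a constant `C > 0` such that for all `n ≥ 2`,
`n * (log n) ^ (log 2) ≤ C * ∑_{k=1}^{n} 2 ^ ω(k)`, where `ω(k)` is the number
of distinct prime divisors of `k`. -/
theorem sum_two_pow_omega_lower_bound :
    ∃ C : ℝ, 0 < C ∧ ∀ n : ℕ, 2 ≤ n →
      (n : ℝ) * Real.log n ^ Real.log 2 ≤
        C * ∑ k ∈ Finset.Icc 1 n, (2 : ℝ) ^ (cardDistinctFactors k) := by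
  refine ⟨5, by norm_num, fun n _ => ?_⟩
  have hlog2 : Real.log 2 ≤ 1 := by linarith [Real.log_two_lt_d9]
  have hrpow := Real.rpow_le_one_add_self (Real.log_natCast_nonneg n)
    (Real.log_nonneg one_le_two) hlog2
  have hsum_ge_n : (n : ℝ) ≤ ∑ k ∈ Icc 1 n, (2 : ℝ) ^ ω k := by
    simpa using card_nsmul_le_sum (Icc 1 n) (fun k => (2 : ℝ) ^ ω k) 1
      fun _ _ => one_le_pow₀ one_le_two
  have hn0 : (0 : ℝ) ≤ n := n.cast_nonneg
  calc (n : ℝ) * Real.log n ^ Real.log 2 ≤ n * (1 + Real.log n) :=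
        mul_le_mul_of_nonneg_left hrpow hn0
    _ ≤ 5 * ∑ k ∈ Icc 1 n, (2 : ℝ) ^ ω k := by
        linarith [sum_Icc_two_pow_cardDistinctFactors_ge n,
          mul_le_mul_of_nonneg_left (log_le_two_mul_sum_squarefree_inv n) hn0]
end

section
/- There exists a real constant C > 0 such that for all natural numbers n ≥ 2, ∑_{k=1}^{n} 2^(ω(k)) ≤ C · n · Real.log n, where ω(k) denotes the number of distinct prime divisors of k. -/
open ArithmeticFunction Finset in
lemma two_pow_omega_le_card_divisors {k : ℕ} (hk : k ≠ 0) :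
    2 ^ (cardDistinctFactors k) ≤ k.divisors.card := by
  rw [Nat.card_divisors hk, cardDistinctFactors_apply, ← List.card_toFinset]
  show 2 ^ k.primeFactors.card ≤ _
  calc 2 ^ k.primeFactors.card = ∏ _p ∈ k.primeFactors, 2 := (Finset.prod_const 2).symm
    _ ≤ ∏ p ∈ k.primeFactors, (k.factorization p + 1) := by
        refine Finset.prod_le_prod' fun p hp => ?_
        obtain ⟨hp1, hp2, _⟩ := Nat.mem_primeFactors.mp hp
        have := hp1.factorization_pos_of_dvd hk hp2
        omega
    _ = k.factorization.prod fun _ e => e + 1 := by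
        rw [Finsupp.prod, Nat.support_factorization]

open ArithmeticFunction Finset in
lemma sum_card_divisors_eq (n : ℕ) :
    ∑ k ∈ Icc 1 n, k.divisors.card = ∑ d ∈ Icc 1 n, n / d := by
  have h1 : ∀ k ∈ Icc 1 n, k.divisors.card = ((Icc 1 n).filter (· ∣ k)).card := by
    intro k hk
    rw [mem_Icc] at hk
    congr 1
    ext d
    simp only [Nat.mem_divisors, mem_filter, mem_Icc]
    constructor
    · rintro ⟨hd, hk0⟩
      exact ⟨⟨Nat.pos_of_dvd_of_pos hd (by omega), (Nat.le_of_dvd (by omega) hd).trans hk.2⟩, hd⟩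
    · rintro ⟨_, hd⟩
      exact ⟨hd, by omega⟩
  rw [Finset.sum_congr rfl h1]
  simp_rw [Finset.card_filter]
  rw [Finset.sum_comm]
  refine Finset.sum_congr rfl fun d _ => ?_
  rw [← Finset.card_filter, show Finset.Icc 1 n = Finset.Ioc 0 n from rfl,
    Nat.Ioc_filter_dvd_card_eq_div]

open ArithmeticFunction in
/-- There is a constant `C > 0` such that for all `n ≥ 2`,
`∑_{k=1}^{n} 2 ^ ω(k) ≤ C * n * log n`, where `ω(k)` is the number of distinct
prime divisors of `k`. -/
theorem sum_two_pow_omega_upper_bound :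
    ∃ C : ℝ, 0 < C ∧ ∀ n : ℕ, 2 ≤ n →
      (∑ k ∈ Finset.Icc 1 n, (2 : ℝ) ^ (cardDistinctFactors k)) ≤
        C * n * Real.log n := by
  have hl2 : (0:ℝ) < Real.log 2 := Real.log_pos (by norm_num)
  refine ⟨1 / Real.log 2 + 1, by positivity, fun n hn => ?_⟩
  have hlogn : Real.log 2 ≤ Real.log n := by
    apply Real.log_le_log (by norm_num)
    exact_mod_cast hn
  have step1 : (∑ k ∈ Finset.Icc 1 n, (2 : ℝ) ^ (cardDistinctFactors k)) ≤
      ∑ k ∈ Finset.Icc 1 n, (k.divisors.card : ℝ) := by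
    refine Finset.sum_le_sum fun k hk => ?_
    rw [Finset.mem_Icc] at hk
    calc (2:ℝ) ^ (cardDistinctFactors k) = ((2 ^ (cardDistinctFactors k) : ℕ) : ℝ) := by
          push_cast; ring
      _ ≤ _ := by exact_mod_cast two_pow_omega_le_card_divisors (by omega)
  have step2 : ∑ k ∈ Finset.Icc 1 n, (k.divisors.card : ℝ) =
      ∑ d ∈ Finset.Icc 1 n, ((n / d : ℕ) : ℝ) := by
    rw [← Nat.cast_sum, ← Nat.cast_sum, sum_card_divisors_eq]
  have step3 : ∑ d ∈ Finset.Icc 1 n, ((n / d : ℕ) : ℝ) ≤ (n : ℝ) * (1 + Real.log n) := by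
    calc ∑ d ∈ Finset.Icc 1 n, ((n / d : ℕ) : ℝ)
        ≤ ∑ d ∈ Finset.Icc 1 n, (n : ℝ) / d :=
          Finset.sum_le_sum fun d _ => Nat.cast_div_le
      _ = (n : ℝ) * ∑ d ∈ Finset.Icc 1 n, (d : ℝ)⁻¹ := by
          rw [Finset.mul_sum]; exact Finset.sum_congr rfl fun d _ => div_eq_mul_inv _ _
      _ = (n : ℝ) * ((harmonic n : ℚ) : ℝ) := by
          congr 1
          rw [harmonic_eq_sum_Icc]
          push_cast
          rfl
      _ ≤ (n : ℝ) * (1 + Real.log n) := by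
          have := harmonic_le_one_add_log n
          have h0 : (0:ℝ) ≤ (n:ℝ) := Nat.cast_nonneg n
          exact mul_le_mul_of_nonneg_left (by exact_mod_cast this) h0
  have final : (n : ℝ) * (1 + Real.log n) ≤ (1 / Real.log 2 + 1) * n * Real.log n := by
    have h1 : (1:ℝ) ≤ (1 / Real.log 2) * Real.log n := by
      rw [div_mul_eq_mul_div, one_mul, le_div_iff₀ hl2, one_mul]
      exact hlogn
    have hn0 : (0:ℝ) ≤ (n:ℝ) := Nat.cast_nonneg n
    nlinarith [hn0, h1]
  linarith [step1, step2.le, step3, final, step2.ge]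
end
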